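/- There exists an absolute constant C > 0 such that for every α ∈ (9/10, 1): the integral I(α) = (1/π) ∫_0^π (sin x)^α cot(x/2) dx is finite and strictly positive, (1/π) ∫_0^π |(sin x)^α − sin x| · cot(x/2) dx ≤ C (1−α), and |c_α − 1| ≤ C (1−α), where c_α = I(α)^{−1}. -/

import Mathlib

/-!
Since `sin x * cot (x / 2) = 1 + cos x`, the normalizing integral satisfies `I(1) = 1`; and since
`sin x ≤ (sin x) ^ α` on `[0, π]`, the integral of `|(sin x) ^ α - sin x| cot (x / 2)` is exactly
`π (I(α) - 1) ≥ 0`. Writing `s ^ α - s = s ^ α (1 - s ^ (1 - α))` and using `1 - e ^ t ≤ -t` and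
`log (1 / s) ≤ 2 s ^ (-α / 2) / α` gives `s ^ α - s ≤ 2 (1 - α) s ^ (α / 2) / α`, while Jordan's
inequality `sin (x / 2) ≥ x / π` gives the integrable majorant
`(sin x) ^ β cot (x / 2) ≤ 2 (x / π) ^ (β - 1)`. Together, `0 ≤ I(α) - 1 ≤ 8 (1 - α) / α ^ 2`,
and `|I⁻¹ - 1| ≤ I - 1` once `I ≥ 1`.
-/

open MeasureTheory Real Set

lemma Real.neg_log_le_rpow_neg_div {s ε : ℝ} (hs : 0 < s) (hε : 0 < ε) :
    -log s ≤ s ^ (-ε) / ε := by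
  have h := log_le_sub_one_of_pos (rpow_pos_of_pos hs (-ε))
  rw [log_rpow hs] at h
  rw [le_div_iff₀ hε]
  linarith

lemma Real.rpow_sub_self_le {s α ε : ℝ} (hs : 0 < s) (hα : α ≤ 1) (hε : 0 < ε) :
    s ^ α - s ≤ (1 - α) / ε * s ^ (α - ε) := by
  have hexp : 1 - s ^ (1 - α) ≤ (1 - α) * -log s := by
    rw [rpow_def_of_pos hs]
    linarith [add_one_le_exp (log s * (1 - α))]
  calc s ^ α - s = s ^ α * (1 - s ^ (1 - α)) := by
        rw [mul_sub, mul_one, ← rpow_add hs, add_sub_cancel, rpow_one]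
    _ ≤ s ^ α * ((1 - α) * (s ^ (-ε) / ε)) := by
        gcongr
        exact hexp.trans (mul_le_mul_of_nonneg_left (neg_log_le_rpow_neg_div hs hε) (by linarith))
    _ = (1 - α) / ε * s ^ (α - ε) := by rw [sub_eq_add_neg α, rpow_add hs]; ring

lemma Real.sin_le_rpow_sin {x α : ℝ} (hx : x ∈ Icc 0 π) (hα : α ≤ 1) : sin x ≤ sin x ^ α :=
  self_le_rpow_of_le_one (sin_nonneg_of_nonneg_of_le_pi hx.1 hx.2) (sin_le_one x) hα

lemma Real.sin_half_pos {x : ℝ} (hx : x ∈ Ioo 0 π) : 0 < sin (x / 2) :=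
  sin_pos_of_pos_of_lt_pi (by linarith [hx.1]) (by linarith [hx.2, pi_pos])

lemma Real.cot_half_nonneg {x : ℝ} (hx : x ∈ Icc 0 π) : 0 ≤ cot (x / 2) := by
  rw [cot_eq_cos_div_sin]
  exact div_nonneg (cos_nonneg_of_mem_Icc ⟨by linarith [hx.1, pi_pos], by linarith [hx.2]⟩)
    (sin_nonneg_of_nonneg_of_le_pi (by linarith [hx.1]) (by linarith [hx.2, pi_pos]))

lemma Real.sin_mul_cot_half {x : ℝ} (hx : sin (x / 2) ≠ 0) :
    sin x * cot (x / 2) = 1 + cos x := by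
  have hsin : sin x = 2 * sin (x / 2) * cos (x / 2) := by rw [← sin_two_mul]; ring_nf
  have hcos : cos x = 2 * cos (x / 2) ^ 2 - 1 := by rw [← cos_two_mul]; ring_nf
  rw [cot_eq_cos_div_sin, hsin, hcos]
  field_simp
  ring

lemma Real.rpow_sin_mul_cot_half_le {x β : ℝ} (hx : x ∈ Ioo 0 π) (hβ0 : 0 ≤ β) (hβ1 : β ≤ 1) :
    sin x ^ β * cot (x / 2) ≤ 2 * (x / π) ^ (β - 1) := by
  have hs := sin_half_pos hx
  have hc : 0 < cos (x / 2) := cos_pos_of_mem_Ioo ⟨by linarith [hx.1, pi_pos], by linarith [hx.2]⟩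
  have hsin : sin x ≤ 2 * sin (x / 2) := by
    rw [show sin x = 2 * sin (x / 2) * cos (x / 2) by rw [← sin_two_mul]; ring_nf]
    nlinarith [cos_le_one (x / 2)]
  have hjordan : x / π ≤ sin (x / 2) := by
    have := mul_le_sin (x := x / 2) (by linarith [hx.1]) (by linarith [hx.2])
    rwa [div_mul_div_comm, mul_comm 2 x, mul_div_mul_right _ _ two_ne_zero] at this
  calc sin x ^ β * cot (x / 2) ≤ (2 * sin (x / 2)) ^ β * (1 / sin (x / 2)) := by
        rw [cot_eq_cos_div_sin]
        gcongr
        · exact (sin_pos_of_pos_of_lt_pi hx.1 hx.2).le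
        · exact cos_le_one _
    _ = 2 ^ β * sin (x / 2) ^ (β - 1) := by
        rw [mul_rpow zero_le_two hs.le, rpow_sub_one hs.ne']; ring
    _ ≤ 2 * (x / π) ^ (β - 1) := by
        gcongr ?_ * ?_
        · exact rpow_le_self_of_one_le one_le_two hβ1
        · exact rpow_le_rpow_of_nonpos (div_pos hx.1 pi_pos) hjordan (by linarith)

lemma intervalIntegral.integral_div_rpow_sub_one {c β : ℝ} (hc : c ≠ 0) (hβ : 0 < β) :
    ∫ x in 0..c, (x / c) ^ (β - 1) = c / β := by
  rw [integral_comp_div (fun x => x ^ (β - 1)) hc, zero_div, div_self hc,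
    integral_rpow (Or.inl (by linarith))]
  simp [smul_eq_mul, hβ.ne']
  ring

lemma intervalIntegrable_div_rpow_sub_one {c β : ℝ} (hβ : 0 < β) :
    IntervalIntegrable (fun x => (x / c) ^ (β - 1)) volume 0 c := by
  simpa [div_eq_mul_inv] using (intervalIntegral.intervalIntegrable_rpow' (r := β - 1)
    (a := 0) (b := 1) (by linarith)).comp_mul_right (c := c⁻¹)

lemma integrableOn_rpow_sin_mul_cot_half {α : ℝ} (hα : 0 < α) :
    IntegrableOn (fun x => sin x ^ α * cot (x / 2)) (Ioo 0 π) := by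
  set β := min α 1
  have hβ : 0 < β := lt_min hα one_pos
  refine Integrable.mono' (((intervalIntegrable_iff_integrableOn_Ioo_of_le pi_pos.le).mp
    (intervalIntegrable_div_rpow_sub_one (c := π) hβ)).const_mul 2) ?_ ?_
  · simp only [cot_eq_cos_div_sin]
    fun_prop
  · refine (ae_restrict_iff' measurableSet_Ioo).2 (ae_of_all _ fun x hx => ?_)
    have hsin : 0 < sin x := sin_pos_of_pos_of_lt_pi hx.1 hx.2
    have hcot := cot_half_nonneg (Ioo_subset_Icc_self hx)
    rw [norm_of_nonneg (by positivity)]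
    calc sin x ^ α * cot (x / 2) ≤ sin x ^ β * cot (x / 2) := by
          gcongr ?_ * _
          exact rpow_le_rpow_of_exponent_ge hsin (sin_le_one x) (min_le_left _ _)
      _ ≤ 2 * (x / π) ^ (β - 1) := rpow_sin_mul_cot_half_le hx hβ.le (min_le_right _ _)

lemma intervalIntegrable_rpow_sin_mul_cot_half {α : ℝ} (hα : 0 < α) :
    IntervalIntegrable (fun x => sin x ^ α * cot (x / 2)) volume 0 π :=
  (intervalIntegrable_iff_integrableOn_Ioo_of_le pi_pos.le).mpr
    (integrableOn_rpow_sin_mul_cot_half hα)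

noncomputable def normalizingIntegral (α : ℝ) : ℝ :=
  (1 / π) * ∫ x in (0:ℝ)..π, sin x ^ α * cot (x / 2)

lemma normalizingIntegral_one : normalizingIntegral 1 = 1 := by
  have h : ∫ x in (0:ℝ)..π, sin x ^ (1:ℝ) * cot (x / 2) = ∫ x in (0:ℝ)..π, 1 + cos x :=
    intervalIntegral.integral_congr_Ioo_of_le pi_pos.le fun x hx => by
      rw [rpow_one, sin_mul_cot_half (sin_half_pos hx).ne']
  rw [normalizingIntegral, h, intervalIntegral.integral_add intervalIntegrable_const
    (continuous_cos.intervalIntegrable _ _)]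
  simp [pi_pos.ne']

lemma normalizingIntegral_sub_one {α : ℝ} (hα : 0 < α) :
    normalizingIntegral α - 1 =
      (1 / π) * ∫ x in (0:ℝ)..π, (sin x ^ α - sin x) * cot (x / 2) := by
  have hone : (1 / π) * ∫ x in (0:ℝ)..π, sin x * cot (x / 2) = 1 := by
    simpa only [normalizingIntegral, rpow_one] using normalizingIntegral_one
  simp_rw [sub_mul]
  rw [intervalIntegral.integral_sub (intervalIntegrable_rpow_sin_mul_cot_half hα)
    (by simpa only [rpow_one] using intervalIntegrable_rpow_sin_mul_cot_half one_pos),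
    mul_sub, hone, normalizingIntegral]

lemma one_le_normalizingIntegral {α : ℝ} (hα0 : 0 < α) (hα1 : α ≤ 1) :
    1 ≤ normalizingIntegral α := by
  rw [← sub_nonneg, normalizingIntegral_sub_one hα0]
  refine mul_nonneg (by positivity) (intervalIntegral.integral_nonneg pi_pos.le fun x hx => ?_)
  exact mul_nonneg (sub_nonneg.2 (sin_le_rpow_sin hx hα1)) (cot_half_nonneg hx)

lemma normalizingIntegral_sub_one_le {α : ℝ} (hα0 : 0 < α) (hα1 : α ≤ 1) :
    normalizingIntegral α - 1 ≤ 8 * (1 - α) / α ^ 2 := by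
  have hε : 0 < α / 2 := by positivity
  have hpt : ∀ x ∈ Ioo 0 π, (sin x ^ α - sin x) * cot (x / 2) ≤
      (1 - α) / (α / 2) * 2 * (x / π) ^ (α / 2 - 1) := by
    intro x hx
    have hcot := cot_half_nonneg (Ioo_subset_Icc_self hx)
    calc (sin x ^ α - sin x) * cot (x / 2)
        ≤ (1 - α) / (α / 2) * sin x ^ (α - α / 2) * cot (x / 2) := by
          gcongr
          exact rpow_sub_self_le (sin_pos_of_pos_of_lt_pi hx.1 hx.2) hα1 hε
      _ ≤ (1 - α) / (α / 2) * 2 * (x / π) ^ (α / 2 - 1) := by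
          rw [mul_assoc, mul_assoc, show α - α / 2 = α / 2 by ring]
          exact mul_le_mul_of_nonneg_left (rpow_sin_mul_cot_half_le hx hε.le (by linarith))
            (div_nonneg (by linarith) hε.le)
  have hint : IntervalIntegrable (fun x => (sin x ^ α - sin x) * cot (x / 2)) volume 0 π := by
    simpa only [sub_mul, rpow_one] using (intervalIntegrable_rpow_sin_mul_cot_half hα0).sub
      (intervalIntegrable_rpow_sin_mul_cot_half one_pos)
  have hmono := intervalIntegral.integral_mono_on_of_le_Ioo pi_pos.le hint
    ((intervalIntegrable_div_rpow_sub_one hε).const_mul _) hpt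
  rw [intervalIntegral.integral_const_mul,
    intervalIntegral.integral_div_rpow_sub_one pi_pos.ne' hε] at hmono
  rw [normalizingIntegral_sub_one hα0]
  calc _ ≤ 1 / π * ((1 - α) / (α / 2) * 2 * (π / (α / 2))) := by gcongr
    _ = 8 * (1 - α) / α ^ 2 := by field_simp; ring

lemma abs_inv_sub_one_le_sub_one {x : ℝ} (hx : 1 ≤ x) : |x⁻¹ - 1| ≤ x - 1 := by
  have hx0 : 0 < x := by linarith
  rw [abs_of_nonpos (sub_nonpos.2 (inv_le_one_of_one_le₀ hx))]
  have := mul_inv_cancel₀ hx0.ne'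
  nlinarith [inv_pos.2 hx0]

theorem c_alpha_estimate :
    ∃ C : ℝ, 0 < C ∧
      ∀ α : ℝ, 9 / 10 < α → α < 1 →
        IntegrableOn (fun x => Real.sin x ^ α * Real.cot (x / 2)) (Ioo (0 : ℝ) π) ∧
        0 < (1 / π) * ∫ x in (0:ℝ)..π, Real.sin x ^ α * Real.cot (x / 2) ∧
        (1 / π) * (∫ x in (0:ℝ)..π, |Real.sin x ^ α - Real.sin x| * Real.cot (x / 2))
          ≤ C * (1 - α) ∧
        |((1 / π) * ∫ x in (0:ℝ)..π, Real.sin x ^ α * Real.cot (x / 2))⁻¹ - 1|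
          ≤ C * (1 - α) := by
  refine ⟨10, by norm_num, fun α hα9 hα1 => ?_⟩
  have hα0 : 0 < α := by linarith
  have hI1 := one_le_normalizingIntegral hα0 hα1.le
  have hI : normalizingIntegral α - 1 ≤ 10 * (1 - α) :=
    (normalizingIntegral_sub_one_le hα0 hα1.le).trans <| by
      rw [div_le_iff₀ (by positivity)]
      nlinarith [mul_pos (mul_pos (sub_pos.2 hα1) (sub_pos.2 hα9)) (by linarith : 0 < α + 9 / 10)]
  have habs : ∫ x in (0:ℝ)..π, |sin x ^ α - sin x| * cot (x / 2) =
      ∫ x in (0:ℝ)..π, (sin x ^ α - sin x) * cot (x / 2) := by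
    refine intervalIntegral.integral_congr fun x hx => ?_
    rw [uIcc_of_le pi_pos.le] at hx
    simp only [abs_of_nonneg (sub_nonneg.2 (sin_le_rpow_sin hx hα1.le))]
  refine ⟨integrableOn_rpow_sin_mul_cot_half hα0, ?_, ?_, ?_⟩
  · change 0 < normalizingIntegral α
    linarith
  · rw [habs, ← normalizingIntegral_sub_one hα0]
    exact hI
  · exact (abs_inv_sub_one_le_sub_one hI1).trans hI
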